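/- arXiv:2211.01905 — 4 statements merged into one kernel-verified Lean document; each statement's English description precedes it below -/
import Mathlib

section
/- For every hypergraph H that has at least one hyperedge and in which every vertex is contained in some hyperedge, the independence number, fractional independence number, and adaptive width satisfy α(H) ≥ 1/2 + α*(H)/(4·aw(H)). -/
noncomputable section

/-! ### Hypergraphs -/

/-- A hypergraph: a vertex set together with a set of nonempty hyperedges. -/
structure Hypergraph' (V : Type) where
  verts : Set V
  edges : Set (Set V)
  edge_nonempty : ∀ e ∈ edges, e.Nonempty
  edge_subset : ∀ e ∈ edges, e ⊆ verts

namespace Hypergraph'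

variable {V : Type}

/-- An independent set: no two of its vertices lie in a common hyperedge. -/
def IsIndepSet (H : Hypergraph' V) (I : Set V) : Prop :=
  I ⊆ H.verts ∧ ∀ u ∈ I, ∀ v ∈ I, u ≠ v → ∀ e ∈ H.edges, ¬(u ∈ e ∧ v ∈ e)

/-- The independence number `α`. -/
def indepNum (H : Hypergraph' V) : ℕ :=
  sSup {n | ∃ I : Set V, H.IsIndepSet I ∧ I.ncard = n}

/-- A fractional independent set: `μ : V(H) → [0,1]` with `∑_{v ∈ e} μ v ≤ 1` for each edge. -/
def IsFracIndep (H : Hypergraph' V) (μ : V → ℝ) : Prop :=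
  (∀ v, 0 ≤ μ v ∧ μ v ≤ 1) ∧ (∀ v, v ∉ H.verts → μ v = 0) ∧
    ∀ e ∈ H.edges, (∑ᶠ v ∈ e, μ v) ≤ 1

/-- The weight of a (fractional independent) vertex-weighting. -/
def weight (H : Hypergraph' V) (μ : V → ℝ) : ℝ := ∑ᶠ v ∈ H.verts, μ v

/-- The fractional independence number `α*`. -/
def fracIndepNum (H : Hypergraph' V) : ℝ :=
  sSup {w | ∃ μ : V → ℝ, H.IsFracIndep μ ∧ H.weight μ = w}

/-- A fractional edge cover of a set `X` of vertices. -/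
def IsFracEdgeCover (H : Hypergraph' V) (X : Set V) (γ : Set V → ℝ) : Prop :=
  (∀ e, 0 ≤ γ e) ∧ (∀ e, e ∉ H.edges → γ e = 0) ∧
    ∀ v ∈ X, 1 ≤ ∑ᶠ e ∈ {e ∈ H.edges | v ∈ e}, γ e

/-- The weight of an edge-weighting. -/
def coverWeight (H : Hypergraph' V) (γ : Set V → ℝ) : ℝ := ∑ᶠ e ∈ H.edges, γ e

/-- `ρ*_H(X)`: the fractional edge cover number of a set `X` of vertices. -/
def fracCoverOf (H : Hypergraph' V) (X : Set V) : ℝ :=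
  sInf {w | ∃ γ : Set V → ℝ, H.IsFracEdgeCover X γ ∧ H.coverWeight γ = w}

/-- The fractional edge cover number `ρ*(H)`. -/
def fracEdgeCoverNum (H : Hypergraph' V) : ℝ := H.fracCoverOf H.verts

/-- A tree decomposition of a hypergraph. -/
structure TreeDecomp (H : Hypergraph' V) where
  n : ℕ
  tree : SimpleGraph (Fin n)
  isTree : tree.IsTree
  bag : Fin n → Set V
  bag_subset : ∀ t, bag t ⊆ H.verts
  verts_covered : ∀ v ∈ H.verts, ∃ t, v ∈ bag t
  edges_covered : ∀ e ∈ H.edges, ∃ t, e ⊆ bag t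
  bags_connected : ∀ (v : V) (t₁ t₂ : Fin n) (h₁ : v ∈ bag t₁) (h₂ : v ∈ bag t₂),
    (tree.induce {t | v ∈ bag t}).Reachable ⟨t₁, h₁⟩ ⟨t₂, h₂⟩

/-- The `μ`-width of a tree decomposition: the maximum `μ`-weight of a bag. -/
def TreeDecomp.muWidth {H : Hypergraph' V} (td : H.TreeDecomp) (μ : V → ℝ) : ℝ :=
  ⨆ t, ∑ᶠ v ∈ td.bag t, μ v

/-- The `μ`-width of a hypergraph: minimum `μ`-width over tree decompositions. -/
def muWidth (H : Hypergraph' V) (μ : V → ℝ) : ℝ :=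
  sInf {w | ∃ td : H.TreeDecomp, td.muWidth μ = w}

/-- The adaptive width `aw(H)`: supremum of the `μ`-widths over fractional
independent sets `μ`. -/
def adaptiveWidth (H : Hypergraph' V) : ℝ :=
  sSup {w | ∃ μ : V → ℝ, H.IsFracIndep μ ∧ H.muWidth μ = w}

/-- The fractional hypertreewidth `fhtw(H)`. -/
def fhtw (H : Hypergraph' V) : ℝ :=
  sInf {w | ∃ td : H.TreeDecomp, (⨆ t, H.fracCoverOf (td.bag t)) = w}

/-- Add a new vertex `v'` to the hypergraph and replace the hyperedge `e` by `e ∪ {v'}`. -/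
def extendEdge (H : Hypergraph' V) (e : Set V) (he : e ∈ H.edges) (v' : V) :
    Hypergraph' V where
  verts := insert v' H.verts
  edges := (H.edges \ {e}) ∪ {insert v' e}
  edge_nonempty := by
    rintro f (⟨hf, -⟩ | hf)
    · exact H.edge_nonempty f hf
    · rw [Set.mem_singleton_iff] at hf; subst hf; exact ⟨v', Set.mem_insert _ _⟩
  edge_subset := by
    rintro f (⟨hf, -⟩ | hf)
    · exact (H.edge_subset f hf).trans (Set.subset_insert _ _)
    · rw [Set.mem_singleton_iff] at hf; subst hf
      exact Set.insert_subset_insert (H.edge_subset e he)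

end Hypergraph'

/-! ### Digraphs -/

namespace Digraph

variable {V A B : Type}

/-- `u` reaches `v` by a directed path (possibly of length 0). -/
def Reaches (G : Digraph V) (u v : V) : Prop := Relation.ReflTransGen G.Adj u v

/-- `R(u)`: the set of vertices reachable from `u` (including `u`). -/
def reachSet (G : Digraph V) (u : V) : Set V := {v | G.Reaches u v}

/-- The setoid whose classes are the strongly connected components. -/
def sccSetoid (G : Digraph V) : Setoid V where
  r u v := G.Reaches u v ∧ G.Reaches v u
  iseqv := ⟨fun _ => ⟨.refl, .refl⟩, fun h => ⟨h.2, h.1⟩,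
    fun h₁ h₂ => ⟨h₁.1.trans h₂.1, h₂.2.trans h₁.2⟩⟩

/-- The condensation `H/∼`: the loop-free DAG obtained by contracting each strongly
connected component to a single vertex. -/
def cond (G : Digraph V) : Digraph (Quotient G.sccSetoid) where
  Adj X Y := X ≠ Y ∧ ∃ a b, Quotient.mk G.sccSetoid a = X ∧
    Quotient.mk G.sccSetoid b = Y ∧ G.Adj a b

/-- `v` lies in a source component: its strongly connected component is not
reachable from any other component. -/
def InSourceComp (G : Digraph V) (v : V) : Prop := ∀ u, G.Reaches u v → G.Reaches v u

/-- `v` is a source: a vertex of in-degree `0`. -/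
def IsSrc (G : Digraph V) (v : V) : Prop := ∀ u, ¬ G.Adj u v

/-- The reachability hypergraph `R(H)` of a digraph: vertices `V(H)`, one hyperedge
`R(s)` for each (representative `s` of a) source component. -/
def reachHyp (G : Digraph V) : Hypergraph' V where
  verts := Set.univ
  edges := {e | ∃ s, G.InSourceComp s ∧ e = G.reachSet s}
  edge_nonempty := by rintro e ⟨s, -, rfl⟩; exact ⟨s, Relation.ReflTransGen.refl⟩
  edge_subset := fun e _ => Set.subset_univ e

/-- The contour `Γ(H)` of a digraph: the reachability hypergraph with all vertices of
source components deleted (empty hyperedges discarded). -/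
def contour (G : Digraph V) : Hypergraph' V where
  verts := {v | ¬ G.InSourceComp v}
  edges := {e | (∃ s, G.InSourceComp s ∧
    e = G.reachSet s \ {v | G.InSourceComp v}) ∧ e.Nonempty}
  edge_nonempty := fun _ he => he.2
  edge_subset := by rintro e ⟨⟨s, -, rfl⟩, -⟩ v hv; exact hv.2

/-- The reachability hypergraph of a DAG: one hyperedge `R(s)` for each in-degree `0`
vertex `s`. -/
def dagReachHyp (G : Digraph V) : Hypergraph' V where
  verts := Set.univ
  edges := {e | ∃ s, G.IsSrc s ∧ e = G.reachSet s}
  edge_nonempty := by rintro e ⟨s, -, rfl⟩; exact ⟨s, Relation.ReflTransGen.refl⟩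
  edge_subset := fun e _ => Set.subset_univ e

/-- The contour of a DAG: the reachability hypergraph with all sources deleted. -/
def dagContour (G : Digraph V) : Hypergraph' V where
  verts := {v | ¬ G.IsSrc v}
  edges := {e | (∃ s, G.IsSrc s ∧ e = G.reachSet s \ {v | G.IsSrc v}) ∧ e.Nonempty}
  edge_nonempty := fun _ he => he.2
  edge_subset := by rintro e ⟨⟨s, -, rfl⟩, -⟩ v hv; exact hv.2

/-- A homomorphism of digraphs: a map preserving arcs. -/
def IsHom (H : Digraph A) (G : Digraph B) (φ : A → B) : Prop :=
  ∀ ⦃u v⦄, H.Adj u v → G.Adj (φ u) (φ v)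

/-- The tensor product of digraphs. -/
def tensor (G : Digraph A) (F : Digraph B) : Digraph (A × B) where
  Adj x y := G.Adj x.1 y.1 ∧ F.Adj x.2 y.2

/-- The induced subdigraph on a set of vertices. -/
def induce (G : Digraph A) (S : Set A) : Digraph S where
  Adj a b := G.Adj a.1 b.1

/-- The quotient digraph `H/σ` of a digraph by a partition (setoid) of its vertices. -/
def quot (H : Digraph A) (σ : Setoid A) : Digraph (Quotient σ) where
  Adj X Y := ∃ a b, Quotient.mk σ a = X ∧ Quotient.mk σ b = Y ∧ H.Adj a b

/-- A loop-free digraph. -/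
def LoopFree (H : Digraph A) : Prop := ∀ v, ¬ H.Adj v v

/-- A digraph without directed cycles (in particular, without loops). -/
def IsAcyclic (H : Digraph A) : Prop := ∀ u v, H.Adj u v → ¬ H.Reaches v u

/-- A canonical DAG: a DAG in which every vertex has in-degree 0 or out-degree 0. -/
def IsCanonicalDAG (H : Digraph A) : Prop :=
  H.IsAcyclic ∧ ∀ v, (∀ u, ¬ H.Adj u v) ∨ (∀ u, ¬ H.Adj v u)

/-- `t` lies in a sink component: from its strongly connected component no other
component is reachable. -/
def IsSinkVert (H : Digraph A) (t : A) : Prop := ∀ v, H.Reaches t v → H.Reaches v t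

/-- Sink deletion: delete all vertices of the strongly connected component of `t`. -/
def sinkDelete (H : Digraph A) (t : A) :
    Digraph {v : A // ¬ (H.Reaches v t ∧ H.Reaches t v)} where
  Adj a b := H.Adj a.1 b.1

/-- Loop deletion: delete the loop at `u`. -/
def deleteLoop (H : Digraph A) (u : A) : Digraph A where
  Adj a b := H.Adj a b ∧ ¬(a = u ∧ b = u)

/-- The number of sources (in-degree `0` vertices) of the condensation `H/∼`. -/
def numSources (H : Digraph A) : ℕ :=
  {X : Quotient H.sccSetoid | ∀ Y, ¬ H.cond.Adj Y X}.ncard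

end Digraph

/-- The number of homomorphisms from `H` to `G`. -/
def homCount {A B : Type} (H : Digraph A) (G : Digraph B) : ℕ :=
  Nat.card {φ : A → B // H.IsHom G φ}

/-- Two digraphs are isomorphic: a bijection of the vertex sets preserving arcs in
both directions. -/
def DigraphIso {A B : Type} (H : Digraph A) (G : Digraph B) : Prop :=
  ∃ e : A ≃ B, ∀ u v, H.Adj u v ↔ G.Adj (e u) (e v)

/-- The number of subgraphs of `G` (pairs of a vertex subset and an arc subset of `G`
among those vertices) that are isomorphic to `H`. -/
def subCount {A B : Type} (H : Digraph A) (G : Digraph B) : ℕ :=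
  Nat.card {p : Set B × (B → B → Prop) //
    (∀ a b, p.2 a b → a ∈ p.1 ∧ b ∈ p.1 ∧ G.Adj a b) ∧
    DigraphIso H (Digraph.mk fun (a b : p.1) => p.2 a b)}

/-- The number of vertex subsets of `G` inducing a subgraph isomorphic to `H`. -/
def indSubCount {A B : Type} (H : Digraph A) (G : Digraph B) : ℕ :=
  Nat.card {S : Set B // DigraphIso H (G.induce S)}

/-- `H'` is an arc supergraph of the loop-free digraph `H`: a loop-free digraph on the
same vertex set whose arc set contains that of `H`. -/
def ArcSupergraph {A : Type} (H H' : Digraph A) : Prop :=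
  H'.LoopFree ∧ ∀ u v, H.Adj u v → H'.Adj u v

/-- The setoid identifying exactly `u` and `v`. -/
def pairSetoid {A : Type} (u v : A) : Setoid A where
  r a b := a = b ∨ (a ∈ ({u, v} : Set A) ∧ b ∈ ({u, v} : Set A))
  iseqv := by
    refine ⟨fun _ => Or.inl rfl, ?_, ?_⟩
    · rintro a b (rfl | ⟨h₁, h₂⟩)
      · exact Or.inl rfl
      · exact Or.inr ⟨h₂, h₁⟩
    · rintro a b c (rfl | ⟨h₁, h₂⟩) h
      · exact h
      · rcases h with rfl | ⟨h₃, h₄⟩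
        · exact Or.inr ⟨h₁, h₂⟩
        · exact Or.inr ⟨h₁, h₄⟩

/-- Arc contraction: identify the endpoints of the arc `(u,v)`; arcs between `u` and
`v` do not yield a loop. -/
def Digraph.contractArc {A : Type} (H : Digraph A) (u v : A) :
    Digraph (Quotient (pairSetoid u v)) where
  Adj X Y := ∃ a b, Quotient.mk (pairSetoid u v) a = X ∧ Quotient.mk (pairSetoid u v) b = Y ∧
    H.Adj a b ∧ ¬(a ≠ b ∧ a ∈ ({u, v} : Set A) ∧ b ∈ ({u, v} : Set A))

/-- `MRMinor M H`: `M` is a monotone reversible minor of `H`, i.e. `M` can be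
obtained (up to isomorphism) from `H` by a finite sequence of sink deletions,
arc contractions, and loop deletions. -/
inductive MRMinor : ∀ {A : Type}, Digraph A → ∀ {B : Type}, Digraph B → Prop
  | of_iso {A B : Type} {M : Digraph A} {H : Digraph B} :
      DigraphIso M H → MRMinor M H
  | sink_del {A B : Type} {M : Digraph A} {H : Digraph B} (t : B) :
      H.IsSinkVert t → MRMinor M (H.sinkDelete t) → MRMinor M H
  | contract {A B : Type} {M : Digraph A} {H : Digraph B} (u v : B) :
      H.Adj u v → MRMinor M (H.contractArc u v) → MRMinor M H
  | loop_del {A B : Type} {M : Digraph A} {H : Digraph B} (u : B) :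
      H.Adj u u → MRMinor M (H.deleteLoop u) → MRMinor M H

/-- `SinkDelSeq H F`: `F` is obtained from `H` by a finite sequence of sink deletions. -/
inductive SinkDelSeq : ∀ {A : Type}, Digraph A → ∀ {B : Type}, Digraph B → Prop
  | refl {A : Type} (H : Digraph A) : SinkDelSeq H H
  | step {A : Type} {H : Digraph A} (t : A) {B : Type} {F : Digraph B} :
      H.IsSinkVert t → SinkDelSeq (H.sinkDelete t) F → SinkDelSeq H F

/-- The directed split of an undirected graph `F`: vertices `V(F) ⊕ E(F)`, with arcs
from each edge `e = {u,v}` to `u` and to `v`. -/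
def dsplit {α : Type} (F : SimpleGraph α) : Digraph (α ⊕ F.edgeSet) where
  Adj x y :=
    match x, y with
    | Sum.inr e, Sum.inl u => u ∈ e.1
    | _, _ => False

/-- `D` has an induced matching gadget of size `k`: arcs `(s i, w i)` with the `w i`
pairwise distinct such that no source of `D` reaches two distinct `w i`. -/
def HasIMG {A : Type} (D : Digraph A) (k : ℕ) : Prop :=
  ∃ s w : Fin k → A, (∀ i, D.Adj (s i) (w i)) ∧ Function.Injective w ∧
    ∀ x, D.IsSrc x → ∀ i j, D.Reaches x (w i) → D.Reaches x (w j) → i = j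

/-- The maximum size of an induced matching gadget of `D`. -/
def imgNum {A : Type} (D : Digraph A) : ℕ := sSup {k | HasIMG D k}

/-- A fractional cover of a DAG `D`: nonnegative weights on the sources such that each
non-source is covered with total weight at least 1; the total weight is at least 1. -/
def Digraph.IsFracCover {A : Type} (D : Digraph A) (ψ : A → ℝ) : Prop :=
  (∀ s, 0 ≤ ψ s) ∧ (∀ s, ¬ D.IsSrc s → ψ s = 0) ∧
    (∀ v, ¬ D.IsSrc v → 1 ≤ ∑ᶠ s ∈ {s | D.IsSrc s ∧ v ∈ D.reachSet s}, ψ s) ∧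
    1 ≤ ∑ᶠ s ∈ {s | D.IsSrc s}, ψ s

/-- The fractional cover number of a DAG: the minimum weight of a fractional cover. -/
def Digraph.dagFracCoverNum {A : Type} (D : Digraph A) : ℝ :=
  sInf {w | ∃ ψ : A → ℝ, D.IsFracCover ψ ∧ (∑ᶠ s ∈ {s | D.IsSrc s}, ψ s) = w}

/-- The fractional cover number `ρ*(H)` of a digraph: the fractional cover number of
its condensation. -/
def Digraph.fracCoverNum {A : Type} (G : Digraph A) : ℝ := G.cond.dagFracCoverNum

/-!
Fix a tree decomposition and a fractional independent set `μ`. The nodes whose bags contain a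
vertex `v` form a subtree `T_v`. Rooting the tree, take the subtree whose node nearest the root
is farthest from it: every subtree meeting it contains that node. Greedily, this yields vertices
with pairwise disjoint subtrees, hence an independent set `I`, together with one node in each
`T_v` (`v ∈ I`) such that every subtree contains one of these `|I|` nodes, so their bags cover
`V(H)`. Therefore `μ(V(H)) ≤ α(H) · (μ-width)`, i.e. `α* ≤ α · aw`, and `α ≥ 1`, `aw ≥ 1`
turn this into the stated bound.
-/

namespace SimpleGraph.IsTree

variable {β : Type*} {T : SimpleGraph β} (hT : T.IsTree)

def path (a b : β) : T.Walk a b := (hT.existsUnique_path a b).exists.choose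

lemma isPath_path (a b : β) : (hT.path a b).IsPath :=
  (hT.existsUnique_path a b).exists.choose_spec

lemma eq_path (hT : T.IsTree) {a b : β} {p : T.Walk a b} (hp : p.IsPath) : p = hT.path a b :=
  (hT.existsUnique_path a b).unique hp (hT.isPath_path a b)

lemma length_path (a b : β) : (hT.path a b).length = T.dist a b := by
  obtain ⟨p, hp, hlen⟩ := hT.connected.exists_path_of_dist a b
  rw [← hT.eq_path hp, hlen]

lemma dist_add_dist_of_mem_support_path {a b z : β} (hz : z ∈ (hT.path a b).support) :
    T.dist a z + T.dist z b = T.dist a b := by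
  classical
  have hp := hT.isPath_path a b
  rw [← hT.length_path, ← hT.length_path, ← hT.length_path, ← hT.eq_path (hp.takeUntil hz),
    ← hT.eq_path (hp.dropUntil hz), ← Walk.length_append, Walk.take_spec]

lemma support_path_subset {S : Set β} (hS : (T.induce S).Preconnected) {a b : β}
    (ha : a ∈ S) (hb : b ∈ S) : ∀ z ∈ (hT.path a b).support, z ∈ S := by
  classical
  obtain ⟨w⟩ := hS ⟨a, ha⟩ ⟨b, hb⟩
  intro z hz
  let w' : T.Walk a b := w.map (Embedding.induce S).toHom
  rw [← hT.eq_path w'.bypass_isPath] at hz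
  obtain ⟨⟨z, hzS⟩, -, rfl⟩ := List.mem_map.mp
    ((Walk.support_map _ w) ▸ Walk.support_bypass_subset_support _ hz)
  exact hzS

lemma exists_gate {S : Set β} (hS : (T.induce S).Preconnected) (hne : S.Nonempty) (r : β) :
    ∃ m ∈ S, ∀ z ∈ S, m ∈ (hT.path r z).support := by
  obtain ⟨m, hmS, hmin⟩ := (measure fun z => T.dist r z).wf.has_min S hne
  refine ⟨m, hmS, fun z hz => ?_⟩
  -- the path `r`-`m` and the path `m`-`z` in `S` can only meet at the vertex of `S` nearest `r`
  have hnodup := (hT.isPath_path m z).support_nodup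
  rw [← Walk.cons_tail_support, List.nodup_cons] at hnodup
  have happend : ((hT.path r m).append (hT.path m z)).IsPath := by
    rw [Walk.isPath_def, Walk.support_append]
    refine (hT.isPath_path r m).support_nodup.append hnodup.2 fun c hcr hcz => ?_
    have hcS : c ∈ S := hT.support_path_subset hS hmS hz c (List.mem_of_mem_tail hcz)
    have hcm : T.dist c m = 0 := by
      have := hT.dist_add_dist_of_mem_support_path hcr
      have : ¬ T.dist r c < T.dist r m := hmin c hcS
      omega
    rw [hT.connected.dist_eq_zero_iff.mp hcm] at hcz
    exact hnodup.1 hcz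
  rw [← hT.eq_path happend]
  exact Walk.mem_support_append_iff _ _ |>.mpr (Or.inl (Walk.end_mem_support _))

lemma mem_of_gate_of_dist_le {r mu mv : β} {Su Sv : Set β} (hSu : (T.induce Su).Preconnected)
    (hmu : mu ∈ Su) (hgu : ∀ z ∈ Su, mu ∈ (hT.path r z).support)
    (hgv : ∀ z ∈ Sv, mv ∈ (hT.path r z).support) (hle : T.dist r mu ≤ T.dist r mv)
    (hmeet : (Su ∩ Sv).Nonempty) : mv ∈ Su := by
  classical
  obtain ⟨x, hxu, hxv⟩ := hmeet
  have hp := hT.isPath_path r x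
  have hmux := hgu x hxu
  have hmvx := hgv x hxv
  rw [← Walk.take_spec _ hmux, Walk.mem_support_append_iff, hT.eq_path (hp.takeUntil hmux),
    hT.eq_path (hp.dropUntil hmux)] at hmvx
  rcases hmvx with hmv | hmv
  · have := hT.dist_add_dist_of_mem_support_path hmv
    have hvu : T.dist mv mu = 0 := by omega
    rw [hT.connected.dist_eq_zero_iff.mp hvu]
    exact hmu
  · exact hT.support_path_subset hSu hmu hxu mv hmv

lemma exists_pairwiseDisjoint_of_gates {ι : Type*} (r : β) (S : ι → Set β) (m : ι → β)
    (A : Finset ι) (hS : ∀ i ∈ A, (T.induce (S i)).Preconnected) (hm : ∀ i ∈ A, m i ∈ S i)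
    (hgate : ∀ i ∈ A, ∀ z ∈ S i, m i ∈ (hT.path r z).support) :
    ∃ P ⊆ A, (P : Set ι).PairwiseDisjoint S ∧ ∀ i ∈ A, ∃ p ∈ P, m p ∈ S i := by
  classical
  induction A using Finset.strongInduction with | H A ih =>
  rcases A.eq_empty_or_nonempty with rfl | hA
  · exact ⟨∅, subset_rfl, by simp, by simp⟩
  obtain ⟨v, hvA, hvmax⟩ := A.exists_max_image (fun i => T.dist r (m i)) hA
  set A' := A.filter (fun i => m v ∉ S i)
  have hA'A : A' ⊆ A := Finset.filter_subset _ _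
  have hA' : A' ⊂ A := Finset.filter_ssubset.mpr ⟨v, hvA, not_not.mpr (hm v hvA)⟩
  obtain ⟨P, hPA', hP, hcover⟩ := ih A' hA' (fun i hi => hS i (hA'A hi))
    (fun i hi => hm i (hA'A hi)) (fun i hi => hgate i (hA'A hi))
  -- since the gate of `S v` is farthest from `r`, every `S q` meeting `S v` contains it
  have hmeet : ∀ q ∈ A, (S q ∩ S v).Nonempty → m v ∈ S q := fun q hq =>
    hT.mem_of_gate_of_dist_le (hS q hq) (hm q hq) (hgate q hq) (hgate v hvA) (hvmax q hq)
  refine ⟨insert v P, Finset.insert_subset hvA (hPA'.trans hA'A), ?_, fun i hi => ?_⟩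
  · rw [Finset.coe_insert]
    refine hP.insert fun q hq _ => Set.disjoint_iff_inter_eq_empty.mpr ?_
    have hq' := Finset.mem_filter.mp (hPA' hq)
    rw [Set.inter_comm, ← Set.not_nonempty_iff_eq_empty]
    exact fun h => hq'.2 (hmeet q hq'.1 h)
  · by_cases hvi : m v ∈ S i
    · exact ⟨v, Finset.mem_insert_self _ _, hvi⟩
    · obtain ⟨p, hp, hpi⟩ := hcover i (Finset.mem_filter.mpr ⟨hi, hvi⟩)
      exact ⟨p, Finset.mem_insert_of_mem hp, hpi⟩

lemma exists_pairwiseDisjoint_hitting (hT : T.IsTree) {ι : Type*} (S : ι → Set β)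
    (A : Finset ι) (hS : ∀ i ∈ A, (T.induce (S i)).Preconnected) (hne : ∀ i ∈ A, (S i).Nonempty) :
    ∃ P ⊆ A, (P : Set ι).PairwiseDisjoint S ∧ ∃ c : ι → β, ∀ i ∈ A, ∃ p ∈ P, c p ∈ S i := by
  have := hT.connected.nonempty
  let r : β := Classical.arbitrary β
  have : ∀ i ∈ A, ∃ m ∈ S i, ∀ z ∈ S i, m ∈ (hT.path r z).support := fun i hi =>
    hT.exists_gate (hS i hi) (hne i hi) r
  choose! m hm hgate using this
  obtain ⟨P, hPA, hP, hcover⟩ := hT.exists_pairwiseDisjoint_of_gates r S m A hS hm hgate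
  exact ⟨P, hPA, hP, m, hcover⟩

end SimpleGraph.IsTree

lemma Finset.sum_biUnion_le_sum_sum {ι α M : Type*} [DecidableEq α] [AddCommMonoid M]
    [PartialOrder M] [IsOrderedAddMonoid M] {f : α → M} (hf : ∀ a, 0 ≤ f a) (s : Finset ι)
    (t : ι → Finset α) : ∑ a ∈ s.biUnion t, f a ≤ ∑ i ∈ s, ∑ a ∈ t i, f a := by
  classical
  induction s using Finset.induction_on with
  | empty => simp
  | insert i s hi ih =>
    rw [Finset.biUnion_insert, Finset.sum_insert hi, ← Finset.union_sdiff_self_eq_union,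
      Finset.sum_union Finset.disjoint_sdiff]
    gcongr
    exact (Finset.sum_le_sum_of_subset_of_nonneg Finset.sdiff_subset fun a _ _ => hf a).trans ih

lemma finsum_mem_pi_single_one {α : Type*} [Finite α] [DecidableEq α] (a : α) (s : Set α) :
    ∑ᶠ x ∈ s, (Pi.single a 1 : α → ℝ) x = s.indicator 1 a := by
  rw [finsum_mem_eq_finite_toFinset_sum _ (Set.toFinite _), Finset.sum_pi_single']
  by_cases ha : a ∈ s <;> simp [ha]

namespace Hypergraph'

variable {V : Type} {H : Hypergraph' V}

def trivialTreeDecomp (H : Hypergraph' V) : H.TreeDecomp where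
  n := 1
  tree := ⊥
  isTree := .of_subsingleton
  bag _ := H.verts
  bag_subset _ := subset_rfl
  verts_covered _ hv := ⟨0, hv⟩
  edges_covered e he := ⟨0, H.edge_subset e he⟩
  bags_connected _ t₁ t₂ _ _ := by
    obtain rfl := Subsingleton.elim t₁ t₂
    rfl

namespace TreeDecomp

lemma sum_bag_le_muWidth (td : H.TreeDecomp) (μ : V → ℝ) (t : Fin td.n) :
    ∑ᶠ v ∈ td.bag t, μ v ≤ td.muWidth μ :=
  le_ciSup (f := fun t => ∑ᶠ v ∈ td.bag t, μ v) (Set.finite_range _).bddAbove t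

lemma muWidth_nonneg (td : H.TreeDecomp) {μ : V → ℝ} (hμ : ∀ v, 0 ≤ μ v) :
    0 ≤ td.muWidth μ := by
  obtain ⟨t⟩ := td.isTree.connected.nonempty
  exact (finsum_nonneg fun v => finsum_nonneg fun _ => hμ v).trans (td.sum_bag_le_muWidth μ t)

end TreeDecomp

lemma muWidth_le_of_treeDecomp {μ : V → ℝ} (hμ : ∀ v, 0 ≤ μ v) (td : H.TreeDecomp) :
    H.muWidth μ ≤ td.muWidth μ :=
  csInf_le ⟨0, by rintro _ ⟨td, rfl⟩; exact td.muWidth_nonneg hμ⟩ ⟨td, rfl⟩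

lemma muWidth_le_weight {μ : V → ℝ} (hμ : ∀ v, 0 ≤ μ v) : H.muWidth μ ≤ H.weight μ :=
  (muWidth_le_of_treeDecomp hμ H.trivialTreeDecomp).trans_eq
    (ciSup_const (ι := Fin 1) (a := H.weight μ))

section Finite

variable [Finite V]

lemma bddAbove_ncard_indepSet : BddAbove {n | ∃ I : Set V, H.IsIndepSet I ∧ I.ncard = n} :=
  ⟨Nat.card V, by rintro _ ⟨I, -, rfl⟩; exact Set.ncard_le_card I⟩

lemma IsIndepSet.ncard_le_indepNum {I : Set V} (hI : H.IsIndepSet I) : I.ncard ≤ H.indepNum :=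
  le_csSup bddAbove_ncard_indepSet ⟨I, hI, rfl⟩

lemma one_le_indepNum (h : H.verts.Nonempty) : 1 ≤ H.indepNum := by
  obtain ⟨v, hv⟩ := h
  have hI : H.IsIndepSet {v} :=
    ⟨Set.singleton_subset_iff.mpr hv, fun a ha b hb hab => absurd (ha.trans hb.symm) hab⟩
  simpa using hI.ncard_le_indepNum

lemma TreeDecomp.weight_le_indepNum_mul (td : H.TreeDecomp) {μ : V → ℝ}
    (hμ : ∀ v, 0 ≤ μ v) : H.weight μ ≤ H.indepNum * td.muWidth μ := by
  classical
  obtain ⟨P, hPV, hP, c, hcover⟩ := td.isTree.exists_pairwiseDisjoint_hitting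
    (fun v => {t | v ∈ td.bag t}) (Set.toFinite H.verts).toFinset
    (fun v _ ⟨t₁, h₁⟩ ⟨t₂, h₂⟩ => td.bags_connected v t₁ t₂ h₁ h₂)
    (fun v hv => td.verts_covered v ((Set.Finite.mem_toFinset _).mp hv))
  -- the two ends of a hyperedge lie in a common bag, so disjoint subtrees give independence
  have hindep : H.IsIndepSet P := by
    refine ⟨fun v hv => (Set.Finite.mem_toFinset _).mp (hPV hv),
      fun u hu v hv huv e he ⟨hue, hve⟩ => ?_⟩
    obtain ⟨t, hte⟩ := td.edges_covered e he
    exact Set.disjoint_left.mp (hP hu hv huv) (hte hue) (hte hve)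
  have hcard : (P.card : ℝ) ≤ H.indepNum := by
    exact_mod_cast Set.ncard_coe_finset P ▸ hindep.ncard_le_indepNum
  have hsub : (Set.toFinite H.verts).toFinset ⊆
      P.biUnion fun p => (Set.toFinite (td.bag (c p))).toFinset := fun v hv => by
    obtain ⟨p, hp, hvp⟩ := hcover v hv
    exact Finset.mem_biUnion.mpr ⟨p, hp, (Set.Finite.mem_toFinset _).mpr hvp⟩
  rw [weight, finsum_mem_eq_finite_toFinset_sum _ (Set.toFinite _)]
  calc ∑ v ∈ (Set.toFinite H.verts).toFinset, μ v
      ≤ ∑ v ∈ P.biUnion fun p => (Set.toFinite (td.bag (c p))).toFinset, μ v :=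
        Finset.sum_le_sum_of_subset_of_nonneg hsub fun v _ _ => hμ v
    _ ≤ ∑ p ∈ P, ∑ v ∈ (Set.toFinite (td.bag (c p))).toFinset, μ v :=
        Finset.sum_biUnion_le_sum_sum hμ _ _
    _ ≤ ∑ _p ∈ P, td.muWidth μ := Finset.sum_le_sum fun p _ => by
        rw [← finsum_mem_eq_finite_toFinset_sum]
        exact td.sum_bag_le_muWidth μ (c p)
    _ = P.card * td.muWidth μ := by rw [Finset.sum_const, nsmul_eq_mul]
    _ ≤ H.indepNum * td.muWidth μ := by gcongr; exact td.muWidth_nonneg hμ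

lemma weight_le_indepNum_mul_muWidth {μ : V → ℝ} (hμ : ∀ v, 0 ≤ μ v) :
    H.weight μ ≤ H.indepNum * H.muWidth μ := by
  rw [muWidth, ← smul_eq_mul, ← Real.sInf_smul_of_nonneg (Nat.cast_nonneg _)]
  have hne : {w | ∃ td : H.TreeDecomp, td.muWidth μ = w}.Nonempty :=
    ⟨_, H.trivialTreeDecomp, rfl⟩
  refine le_csInf hne.smul_set ?_
  rintro _ ⟨_, ⟨td, rfl⟩, rfl⟩
  exact td.weight_le_indepNum_mul hμ

lemma weight_le_natCard {μ : V → ℝ} (hμ : ∀ v, μ v ≤ 1) : H.weight μ ≤ Nat.card V := by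
  rw [weight, finsum_mem_eq_finite_toFinset_sum _ (Set.toFinite _)]
  calc ∑ v ∈ (Set.toFinite H.verts).toFinset, μ v
      ≤ ∑ _v ∈ (Set.toFinite H.verts).toFinset, (1 : ℝ) :=
        Finset.sum_le_sum fun v _ => hμ v
    _ = H.verts.ncard := by rw [Set.ncard_eq_toFinset_card _ (Set.toFinite _)]; simp
    _ ≤ Nat.card V := by exact_mod_cast Set.ncard_le_card _

lemma muWidth_le_adaptiveWidth {μ : V → ℝ} (hμ : H.IsFracIndep μ) :
    H.muWidth μ ≤ H.adaptiveWidth := by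
  refine le_csSup ⟨Nat.card V, ?_⟩ ⟨μ, hμ, rfl⟩
  rintro _ ⟨ν, hν, rfl⟩
  exact (muWidth_le_weight fun v => (hν.1 v).1).trans (weight_le_natCard fun v => (hν.1 v).2)

lemma one_le_adaptiveWidth (h : H.verts.Nonempty) : 1 ≤ H.adaptiveWidth := by
  classical
  obtain ⟨v, hv⟩ := h
  have hfrac : H.IsFracIndep (Pi.single v 1) := by
    refine ⟨fun w => ?_, fun w hw => Pi.single_eq_of_ne (ne_of_mem_of_not_mem hv hw).symm _,
      fun e _ => ?_⟩
    · rcases eq_or_ne w v with rfl | hwv <;> simp [*]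
    · rw [finsum_mem_pi_single_one]
      exact Set.indicator_apply_le' (fun _ => le_rfl) fun _ => zero_le_one
  refine le_trans ?_ (muWidth_le_adaptiveWidth hfrac)
  refine le_csInf ⟨_, H.trivialTreeDecomp, rfl⟩ ?_
  rintro _ ⟨td, rfl⟩
  obtain ⟨t, ht⟩ := td.verts_covered v hv
  have := td.sum_bag_le_muWidth (Pi.single v 1) t
  rwa [finsum_mem_pi_single_one, Set.indicator_of_mem ht] at this

lemma fracIndepNum_le_indepNum_mul_adaptiveWidth :
    H.fracIndepNum ≤ H.indepNum * H.adaptiveWidth := by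
  have hzero : H.IsFracIndep 0 :=
    ⟨fun _ => ⟨le_rfl, zero_le_one⟩, fun _ _ => rfl, fun _ _ => by simp⟩
  refine csSup_le ⟨_, 0, hzero, rfl⟩ ?_
  rintro _ ⟨μ, hμ, rfl⟩
  calc H.weight μ ≤ H.indepNum * H.muWidth μ :=
        weight_le_indepNum_mul_muWidth fun v => (hμ.1 v).1
    _ ≤ H.indepNum * H.adaptiveWidth := by gcongr; exact muWidth_le_adaptiveWidth hμ

end Finite

end Hypergraph'

theorem stmt0_general {V : Type} [Fintype V] (H : Hypergraph' V)
    (h1 : H.edges.Nonempty) :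
    (H.indepNum : ℝ) ≥ 1 / 2 + H.fracIndepNum / (4 * H.adaptiveWidth) := by
  obtain ⟨e, he⟩ := h1
  have hV : H.verts.Nonempty := (H.edge_nonempty e he).mono (H.edge_subset e he)
  have hα : (1 : ℝ) ≤ H.indepNum := by exact_mod_cast H.one_le_indepNum hV
  have haw : 1 ≤ H.adaptiveWidth := H.one_le_adaptiveWidth hV
  calc 1 / 2 + H.fracIndepNum / (4 * H.adaptiveWidth)
      ≤ 1 / 2 + H.indepNum * H.adaptiveWidth / (4 * H.adaptiveWidth) := by
        gcongr; exact H.fracIndepNum_le_indepNum_mul_adaptiveWidth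
    _ = 1 / 2 + H.indepNum / 4 := by field_simp
    _ ≤ H.indepNum := by linarith

theorem stmt0 {V : Type} [Fintype V] (H : Hypergraph' V)
    (h1 : H.edges.Nonempty) (h2 : ∀ v ∈ H.verts, ∃ e ∈ H.edges, v ∈ e) :
    (H.indepNum : ℝ) ≥ 1 / 2 + H.fracIndepNum / (4 * H.adaptiveWidth) :=
  stmt0_general H h1

end
end

section
/- For every digraph H, the independence number of the contour of H equals the independence number of the contour of the condensation H/∼, that is, α(Γ(H)) = α(Γ(H/∼)). -/
noncomputable section

/-!
Reachability descends to the condensation: `⟦u⟧` reaches `⟦v⟧` in `H/∼` iff `u` reaches `v`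
in `H`, so the source components of `H` are exactly the sources of `H/∼`. A set is independent
in a contour iff it avoids the source components and no source reaches two of its vertices.
Hence taking components maps independent sets of `Γ(H)` to independent sets of `Γ(H/∼)`,
injectively since in a finite digraph every strong component is reached from some source, and
choosing representatives maps independent sets back.
-/

namespace Hypergraph'

variable {V W : Type}

lemma indepNum_eq_of_exists_iff {G : Hypergraph' V} {G' : Hypergraph' W}
    (h : ∀ n, (∃ I, G.IsIndepSet I ∧ I.ncard = n) ↔ ∃ J, G'.IsIndepSet J ∧ J.ncard = n) :
    G.indepNum = G'.indepNum :=
  congrArg sSup (Set.ext h)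

end Hypergraph'

namespace Digraph

variable {V : Type} (H : Digraph V)

lemma reaches_cond_mk_of_reaches {u v : V} (h : H.Reaches u v) :
    H.cond.Reaches ⟦u⟧ ⟦v⟧ := by
  induction h with
  | refl => exact .refl
  | @tail b c _ hbc ih =>
    by_cases hq : (⟦b⟧ : Quotient H.sccSetoid) = ⟦c⟧
    · rwa [← hq]
    · exact ih.tail ⟨hq, b, c, rfl, rfl, hbc⟩

lemma reaches_of_reaches_cond_mk {u v : V} (h : H.cond.Reaches ⟦u⟧ ⟦v⟧) :
    H.Reaches u v := by
  suffices ∀ X Y, H.cond.Reaches X Y → ∀ u v, ⟦u⟧ = X → ⟦v⟧ = Y → H.Reaches u v from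
    this _ _ h u v rfl rfl
  intro X Y hXY
  induction hXY with
  | refl => exact fun u v hu hv => (Quotient.exact (hu.trans hv.symm)).1
  | @tail Y Z _ hYZ ih =>
    obtain ⟨-, a, b, ha, hb, hab⟩ := hYZ
    exact fun u v hu hv => ((ih u a hu ha).tail hab).trans (Quotient.exact (hb.trans hv.symm)).1

lemma reaches_cond_mk_iff {u v : V} : H.cond.Reaches ⟦u⟧ ⟦v⟧ ↔ H.Reaches u v :=
  ⟨H.reaches_of_reaches_cond_mk, H.reaches_cond_mk_of_reaches⟩

lemma inSourceComp_cond_mk_iff {v : V} : H.cond.InSourceComp ⟦v⟧ ↔ H.InSourceComp v := by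
  simp only [InSourceComp, Quotient.forall, reaches_cond_mk_iff]

lemma exists_inSourceComp_reaches [Finite V] (v : V) :
    ∃ s, H.InSourceComp s ∧ H.Reaches s v := by
  -- `InSourceComp` is minimality for the reachability preorder, and finite preorders are
  -- well-founded.
  let : Preorder V :=
    { le := H.Reaches, le_refl := fun _ => .refl, le_trans := fun _ _ _ => .trans }
  obtain ⟨s, hsv, -, hmin⟩ := exists_minimal_le_of_wellFoundedLT (fun _ => True) v trivial
  exact ⟨s, fun u hus => hmin trivial hus, hsv⟩

lemma contour_isIndepSet_iff {I : Set V} :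
    H.contour.IsIndepSet I ↔ (∀ v ∈ I, ¬ H.InSourceComp v) ∧
      ∀ u ∈ I, ∀ v ∈ I, ∀ s, H.InSourceComp s → H.Reaches s u → H.Reaches s v → u = v := by
  refine ⟨fun hI => ⟨hI.1, fun u hu v hv s hs hsu hsv => ?_⟩, fun hI => ⟨hI.1, ?_⟩⟩
  · by_contra huv
    exact hI.2 u hu v hv huv _ ⟨⟨s, hs, rfl⟩, u, hsu, hI.1 hu⟩ ⟨⟨hsu, hI.1 hu⟩, hsv, hI.1 hv⟩
  · rintro u hu v hv huv _ ⟨⟨s, hs, rfl⟩, -⟩ ⟨⟨hsu, -⟩, hsv, -⟩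
    exact huv (hI.2 u hu v hv s hs hsu hsv)

lemma injOn_mk_of_contour_isIndepSet [Finite V] {I : Set V} (hI : H.contour.IsIndepSet I) :
    Set.InjOn (Quotient.mk H.sccSetoid) I := by
  intro u hu v hv huv
  obtain ⟨s, hs, hsu⟩ := H.exists_inSourceComp_reaches u
  exact (H.contour_isIndepSet_iff.1 hI).2 u hu v hv s hs hsu (hsu.trans (Quotient.exact huv).1)

lemma cond_contour_isIndepSet_image_mk {I : Set V} (hI : H.contour.IsIndepSet I) :
    H.cond.contour.IsIndepSet (Quotient.mk H.sccSetoid '' I) := by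
  rw [contour_isIndepSet_iff] at hI ⊢
  refine ⟨Set.forall_mem_image.2 fun v hv => ?_, Set.forall_mem_image.2 fun u hu =>
    Set.forall_mem_image.2 fun v hv => Quotient.ind fun s => ?_⟩
  · rw [inSourceComp_cond_mk_iff]
    exact hI.1 v hv
  · rw [inSourceComp_cond_mk_iff, reaches_cond_mk_iff, reaches_cond_mk_iff]
    exact fun hs hsu hsv => congrArg _ (hI.2 u hu v hv s hs hsu hsv)

lemma contour_isIndepSet_image_out {J : Set (Quotient H.sccSetoid)}
    (hJ : H.cond.contour.IsIndepSet J) : H.contour.IsIndepSet (Quotient.out '' J) := by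
  rw [contour_isIndepSet_iff] at hJ ⊢
  refine ⟨Set.forall_mem_image.2 fun X hX => ?_, Set.forall_mem_image.2 fun X hX =>
    Set.forall_mem_image.2 fun Y hY s hs hsX hsY => ?_⟩
  · rw [← inSourceComp_cond_mk_iff, Quotient.out_eq]
    exact hJ.1 X hX
  · rw [← reaches_cond_mk_iff, Quotient.out_eq] at hsX hsY
    rw [hJ.2 X hX Y hY _ (H.inSourceComp_cond_mk_iff.2 hs) hsX hsY]

end Digraph

theorem stmt1 {V : Type} [Fintype V] (H : Digraph V) :
    H.contour.indepNum = H.cond.contour.indepNum := by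
  refine Hypergraph'.indepNum_eq_of_exists_iff fun n => ⟨?_, ?_⟩
  · rintro ⟨I, hI, rfl⟩
    exact ⟨_, H.cond_contour_isIndepSet_image_mk hI,
      (H.injOn_mk_of_contour_isIndepSet hI).ncard_image⟩
  · rintro ⟨J, hJ, rfl⟩
    exact ⟨_, H.contour_isIndepSet_image_out hJ,
      Set.ncard_image_of_injective _ Quotient.out_injective⟩

end
end

section
/- If H_1 and H_2 are finite digraphs such that #Hom(H_1 → G) = #Hom(H_2 → G) for every finite digraph G, then H_1 and H_2 are isomorphic. -/
noncomputable section

/-!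
Lovász's argument. Grouping the homomorphisms `H → G` by the subgraph `F` of `G` they trace out
gives `#Hom(H → G) = ∑_{F ⊆ G} #Epi(H → F)`, where `Epi` counts maps onto the vertices and arcs
of `F`. Möbius inversion over the subgraphs of `G` then turns equal homomorphism counts into equal
`Epi` counts. Taking `F = H₁` yields a map of `H₂` onto `H₁`, and symmetrically one of `H₁` onto
`H₂`; so the vertex counts agree, the first map is a bijection, and being onto the arcs of `H₁`
it is an isomorphism.
-/

open Finset in
theorem Nat.card_subtype_le_eq_sum {X α : Type*} [Fintype X] [Fintype α] [PartialOrder α]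
    [DecidableLE α] (f : X → α) (a : α) :
    Nat.card {x // f x ≤ a} = ∑ b with b ≤ a, Nat.card {x // f x = b} := by
  classical
  simp only [Nat.card_eq_fintype_card, Fintype.card_subtype]
  rw [card_eq_sum_card_fiberwise (t := {b | b ≤ a}) (fun x hx => by simpa using hx)]
  refine sum_congr rfl fun b hb => congrArg card ?_
  ext x
  simp only [mem_filter, mem_univ, true_and, and_iff_right_iff_imp]
  rintro rfl
  simpa using hb

open Finset in
theorem Finset.eq_of_sum_filter_le_eq {α M : Type*} [Fintype α] [PartialOrder α] [DecidableLE α]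
    [AddCancelCommMonoid M] {g₁ g₂ : α → M}
    (h : ∀ a, ∑ b with b ≤ a, g₁ b = ∑ b with b ≤ a, g₂ b) : g₁ = g₂ := by
  classical
  have split : ∀ (g : α → M) a, ∑ b with b ≤ a, g b = g a + ∑ b with b < a, g b := by
    intro g a
    rw [← add_sum_erase (univ.filter (· ≤ a)) g (mem_filter.2 ⟨mem_univ a, le_rfl⟩)]
    congr 2
    ext b
    simp [lt_iff_le_and_ne, and_comm]
  funext a
  induction a using WellFoundedLT.induction with
  | _ a ih =>
    have ha := h a
    rw [split, split, sum_congr rfl fun b hb => ih b (mem_filter.1 hb).2] at ha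
    exact add_right_cancel ha

namespace Digraph

variable {V W : Type*}

def arcSet (H : Digraph V) : Set (V × V) := {x | H.Adj x.1 x.2}

/-- The subgraph traced out by `φ`; the product order on such pairs is inclusion of subgraphs. -/
def image (H : Digraph V) (φ : V → W) : Set W × Set (W × W) :=
  (Set.range φ, Prod.map φ φ '' H.arcSet)

def ofArcs (S : Set W) (E : Set (W × W)) : Digraph S where
  Adj a b := (a.1, b.1) ∈ E

theorem image_id (H : Digraph V) : H.image id = (Set.univ, H.arcSet) := by
  simp [image]

theorem surjective_of_image_eq_image_id {H₁ : Digraph V} {H₂ : Digraph W} {ψ : W → V}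
    (hψ : H₂.image ψ = H₁.image id) : Function.Surjective ψ :=
  Set.range_eq_univ.1 (by simpa [image_id, image] using congrArg Prod.fst hψ)

theorem homCount_ofArcs {V W : Type} (H : Digraph V) (S : Set W) (E : Set (W × W)) :
    homCount H (ofArcs S E) = Nat.card {φ : V → W // H.image φ ≤ (S, E)} :=
  Nat.card_congr
    { toFun := fun φ => ⟨fun v => φ.1 v, by
        refine ⟨?_, ?_⟩
        · rintro _ ⟨v, rfl⟩
          exact (φ.1 v).2
        · rintro _ ⟨⟨u, v⟩, huv, rfl⟩
          exact φ.2 huv⟩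
      invFun := fun φ => ⟨fun v => ⟨φ.1 v, φ.2.1 (Set.mem_range_self v)⟩,
        fun u v huv => φ.2.2 ⟨(u, v), huv, rfl⟩⟩
      left_inv := fun _ => rfl
      right_inv := fun _ => rfl }

end Digraph

open Digraph

section HomCountEq

variable {V₁ V₂ : Type} [Fintype V₁] [Fintype V₂] {H₁ : Digraph V₁} {H₂ : Digraph V₂}

/-- Homomorphism counts into `ofArcs S E` sum the counts of maps with each image below `(S, E)`,
so inverting over the finite lattice of such pairs recovers the count for every image. -/
theorem card_image_eq_of_homCount_eq
    (h : ∀ (W : Type) [Fintype W] (G : Digraph W), homCount H₁ G = homCount H₂ G)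
    (W : Type) [Fintype W] (q : Set W × Set (W × W)) :
    Nat.card {φ : V₁ → W // H₁.image φ = q} = Nat.card {φ : V₂ → W // H₂.image φ = q} := by
  classical
  refine congrFun (Finset.eq_of_sum_filter_le_eq
    (g₁ := fun q => Nat.card {φ : V₁ → W // H₁.image φ = q})
    (g₂ := fun q => Nat.card {φ : V₂ → W // H₂.image φ = q}) fun p => ?_) q
  obtain ⟨S, E⟩ := p
  rw [← Nat.card_subtype_le_eq_sum H₁.image, ← Nat.card_subtype_le_eq_sum H₂.image,
    ← homCount_ofArcs, ← homCount_ofArcs, h]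

theorem exists_image_eq_image_id_of_homCount_eq
    (h : ∀ (W : Type) [Fintype W] (G : Digraph W), homCount H₁ G = homCount H₂ G) :
    ∃ ψ : V₂ → V₁, H₂.image ψ = H₁.image id := by
  have : Nonempty {φ : V₁ → V₁ // H₁.image φ = H₁.image id} := ⟨⟨id, rfl⟩⟩
  have hpos := Nat.card_pos (α := {φ : V₁ → V₁ // H₁.image φ = H₁.image id})
  rw [card_image_eq_of_homCount_eq h] at hpos
  obtain ⟨⟨ψ, hψ⟩⟩ := (Nat.card_pos_iff.1 hpos).1
  exact ⟨ψ, hψ⟩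

end HomCountEq

theorem digraphIso_of_image_eq_image_id {V₁ V₂ : Type} [Finite V₂] {H₁ : Digraph V₁}
    {H₂ : Digraph V₂} {ψ : V₂ → V₁} (hψ : H₂.image ψ = H₁.image id)
    (hcard : Nat.card V₂ ≤ Nat.card V₁) : DigraphIso H₁ H₂ := by
  have hbij := (surjective_of_image_eq_image_id hψ).bijective_of_nat_card_le hcard
  have harcs : Prod.map ψ ψ '' H₂.arcSet = H₁.arcSet := by
    simpa [image_id, image] using congrArg Prod.snd hψ
  have hadj : ∀ u v, H₂.Adj u v ↔ H₁.Adj (ψ u) (ψ v) := fun u v => by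
    change (u, v) ∈ H₂.arcSet ↔ (ψ u, ψ v) ∈ H₁.arcSet
    rw [← harcs]
    exact (hbij.1.prodMap hbij.1).mem_set_image.symm
  refine ⟨(Equiv.ofBijective ψ hbij).symm, fun u v => ?_⟩
  rw [hadj, Equiv.ofBijective_apply_symm_apply ψ hbij, Equiv.ofBijective_apply_symm_apply ψ hbij]

theorem stmt5 {V₁ V₂ : Type} [Fintype V₁] [Fintype V₂]
    (H₁ : Digraph V₁) (H₂ : Digraph V₂)
    (h : ∀ (W : Type) [Fintype W] (G : Digraph W), homCount H₁ G = homCount H₂ G) :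
    DigraphIso H₁ H₂ := by
  obtain ⟨ψ, hψ⟩ := exists_image_eq_image_id_of_homCount_eq h
  obtain ⟨φ, hφ⟩ := exists_image_eq_image_id_of_homCount_eq fun W _ G => (h W G).symm
  exact digraphIso_of_image_eq_image_id hψ
    (Nat.card_le_card_of_surjective φ (surjective_of_image_eq_image_id hφ))

end
end

section
/- For every digraph H there exist n ∈ ℕ, pairwise non-isomorphic digraphs F_1,…,F_n, and nonzero rational numbers a_1,…,a_n such that for every digraph G, #Sub(H→G) = Σ_{i=1}^n a_i · #Hom(F_i→G); moreover, every F_i is a quotient of H, and every quotient of H is isomorphic to some F_i. -/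
noncomputable section

/-!
`hom(H/σ, G)` counts the homomorphisms `H → G` whose kernel contains `σ`. Sorting them by
kernel and inverting over the partition lattice gives the number of injective homomorphisms as
`∑_σ μ(⊥, σ) hom(H/σ, G)`, and this number is `aut(H) · sub(H, G)`. Grouping the quotients
into isomorphism classes keeps every coefficient nonzero: by Weisner's theorem `μ(⊥, σ)` has
sign `(-1)^(|V| - |V/σ|)`, which is constant on an isomorphism class.
-/

open Finset

open IncidenceAlgebra in
theorem IncidenceAlgebra.sum_mu_bot_of_sup_eq {𝕜 α : Type*} [Ring 𝕜] [Lattice α] [OrderBot α]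
    [LocallyFiniteOrder α] [DecidableEq α] {a : α} (ha : a ≠ ⊥) (b : α) :
    ∑ x ∈ Iic b with x ⊔ a = b, mu 𝕜 ⊥ x = 0 := by
  calc ∑ x ∈ Iic b with x ⊔ a = b, mu 𝕜 ⊥ x
      = ∑ x ∈ Iic b, mu 𝕜 ⊥ x * ∑ y ∈ Icc (x ⊔ a) b, mu 𝕜 y b := by
        simp only [sum_Icc_mu_left, mul_ite, mul_one, mul_zero, sum_ite, sum_const_zero,
          add_zero]
    _ = ∑ y ∈ Icc a b, ∑ x ∈ Iic y, mu 𝕜 ⊥ x * mu 𝕜 y b := by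
        simp_rw [mul_sum]
        refine sum_comm' fun x y => ?_
        simp only [mem_Iic, mem_Icc, sup_le_iff]
        exact ⟨fun ⟨_, ⟨hxy, hay⟩, hyb⟩ => ⟨hxy, hay, hyb⟩,
          fun ⟨hxy, hay, hyb⟩ => ⟨hxy.trans hyb, ⟨hxy, hay⟩, hyb⟩⟩
    _ = 0 := by
        refine sum_eq_zero fun y hy => ?_
        rw [← sum_mul, ← Icc_bot, sum_Icc_mu_right, if_neg, zero_mul]
        rintro rfl
        exact ha (le_bot_iff.mp (mem_Icc.mp hy).1)

namespace Setoid

instance {α : Type*} [Finite α] : Finite (Setoid α) :=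
  Finite.of_injective (fun r : Setoid α => (r : α → α → Prop)) fun _ _ h =>
    Setoid.ext fun a b => iff_of_eq (congrFun (congrFun h a) b)

instance {α : Type*} [Finite α] : Fintype (Setoid α) := Fintype.ofFinite _

instance {α : Type*} [Finite α] : LocallyFiniteOrder (Setoid α) := by
  classical exact Fintype.toLocallyFiniteOrder

theorem exists_rel_of_ne_bot {α : Type*} {τ : Setoid α} (hτ : τ ≠ ⊥) : ∃ u v, u ≠ v ∧ τ u v := by
  by_contra! h
  exact hτ (eq_bot_iff.mpr fun {u v} huv => by_contra fun hne => h u v hne huv)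

variable {α : Type}

theorem pairSetoid_le {τ : Setoid α} {u v : α} (h : τ u v) : pairSetoid u v ≤ τ := by
  rintro p q (rfl | ⟨hp, hq⟩)
  · exact τ.refl p
  · simp only [Set.mem_insert_iff, Set.mem_singleton_iff] at hp hq
    rcases hp with rfl | rfl <;> rcases hq with rfl | rfl
    exacts [τ.refl _, h, τ.symm h, τ.refl _]

theorem pairSetoid_rel (u v : α) : pairSetoid u v u v :=
  Or.inr ⟨Set.mem_insert _ _, Set.mem_insert_of_mem _ rfl⟩

theorem pairSetoid_ne_bot {u v : α} (h : u ≠ v) : pairSetoid u v ≠ ⊥ :=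
  fun h' => h <| by
    have := pairSetoid_rel u v
    rwa [h', Setoid.bot_def] at this

theorem card_quotient_eq_card_quotient_sup_pairSetoid_add_one [Finite α] {x : Setoid α}
    {u v : α} (h : ¬ x u v) :
    Nat.card (Quotient x) = Nat.card (Quotient (x ⊔ pairSetoid u v)) + 1 := by
  classical
  -- `x ⊔ pairSetoid u v` is the kernel of `w ↦ [f w]`, where `f` moves the class of `v` onto `u`.
  set f : α → α := fun w => if x w v then u else w
  have hf_rel : ∀ w, (x ⊔ pairSetoid u v) w (f w) := by
    intro w
    by_cases hw : x w v
    · simp only [f, if_pos hw]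
      exact (x ⊔ pairSetoid u v).trans (le_sup_left (b := pairSetoid u v) hw)
        ((x ⊔ pairSetoid u v).symm (le_sup_right (a := x) (pairSetoid_rel u v)))
    · simp only [f, if_neg hw]; exact (x ⊔ pairSetoid u v).refl w
  have hf_ne : ∀ w, ¬ x (f w) v := fun w => by
    by_cases hw : x w v <;> simp [f, hw, h]
  have hker : x ⊔ pairSetoid u v = ker (Quotient.mk x ∘ f) := by
    refine le_antisymm (sup_le ?_ ?_) fun p q hpq => ?_
    · intro p q hpq
      simp only [ker_def, Function.comp_apply, Quotient.eq]
      by_cases hp : x p v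
      · simp only [f, if_pos hp, if_pos (x.trans (x.symm hpq) hp)]; exact x.refl u
      · simp only [f, if_neg hp, if_neg fun hq => hp (x.trans hpq hq)]; exact hpq
    · exact pairSetoid_le (by
        simp only [ker_def, Function.comp_apply, f, if_neg h, if_pos (x.refl v)])
    · have : x (f p) (f q) := Quotient.exact hpq
      exact (x ⊔ pairSetoid u v).trans (hf_rel p)
        ((x ⊔ pairSetoid u v).trans (le_sup_left (b := pairSetoid u v) this)
          ((x ⊔ pairSetoid u v).symm (hf_rel q)))
  have hrange : Set.range (Quotient.mk x ∘ f) = {Quotient.mk x v}ᶜ := by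
    ext X
    induction X using Quotient.ind with | _ w => ?_
    simp only [Set.mem_range, Function.comp_apply, Set.mem_compl_iff, Set.mem_singleton_iff,
      Quotient.eq]
    refine ⟨fun ⟨w', hw'⟩ hwv => hf_ne w' (x.trans hw' hwv), fun hwv => ⟨w, ?_⟩⟩
    simp only [f, if_neg hwv]; exact x.refl w
  rw [hker, Nat.card_congr (quotientKerEquivRange _), hrange, Nat.card_coe_set_eq,
    ← Set.ncard_add_ncard_compl {Quotient.mk x v}, Set.ncard_singleton, add_comm]

theorem exists_ne_sup_pairSetoid_eq {τ : Setoid α} {u v : α} (huv : u ≠ v) (h : τ u v) :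
    ∃ x, x ⊔ pairSetoid u v = τ ∧ x ≠ τ := by
  -- split `v` off its `τ`-class
  set x := τ ⊓ ker (· = v)
  have hx : ∀ {p q}, τ p q → (p ≠ v ↔ q ≠ v) → x p q := fun hpq hpv =>
    inf_iff_and.mpr ⟨hpq, ker_def.mpr (propext (not_iff_not.mp hpv))⟩
  refine ⟨x, le_antisymm (sup_le inf_le_left (pairSetoid_le h)) fun p q hpq => ?_, fun hxτ => ?_⟩
  · have key : ∀ {p}, p ≠ v → τ p v → (x ⊔ pairSetoid u v) p v := fun hp hpv =>
      (x ⊔ pairSetoid u v).trans (le_sup_left (b := pairSetoid u v)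
        (hx (τ.trans hpv (τ.symm h)) (iff_of_true hp huv)))
        (le_sup_right (a := x) (pairSetoid_rel u v))
    by_cases hp : p = v <;> by_cases hq : q = v
    · subst p q; exact (x ⊔ pairSetoid u v).refl _
    · subst p; exact (x ⊔ pairSetoid u v).symm (key hq (τ.symm hpq))
    · subst q; exact key hp hpq
    · exact le_sup_left (b := pairSetoid u v) (hx hpq (iff_of_true hp hq))
  · have : x u v := hxτ ▸ h
    exact huv (by simpa using ker_def.mp (inf_iff_and.mp this).2)

open IncidenceAlgebra in
open scoped Classical in
theorem neg_one_pow_mul_mu_bot_pos [Finite α] (σ : Setoid α) :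
    0 < (-1 : ℚ) ^ (Nat.card α + Nat.card (Quotient σ)) * mu ℚ ⊥ σ := by
  induction σ using WellFoundedLT.induction with
  | _ τ ih =>
  obtain rfl | hτ := eq_or_ne τ ⊥
  · rw [mu_self, mul_one, Nat.card_congr quotientBotEquiv, ← two_mul, pow_mul]; norm_num
  obtain ⟨u, v, huv, hτuv⟩ := exists_rel_of_ne_bot hτ
  -- Weisner's theorem with the atom `pairSetoid u v`: every other term lies one rank below `τ`
  set T := ((Iic τ).filter (· ⊔ pairSetoid u v = τ)).erase τ
  have hmu : mu ℚ ⊥ τ = -∑ x ∈ T, mu ℚ ⊥ x := by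
    have hW := sum_mu_bot_of_sup_eq (𝕜 := ℚ) (pairSetoid_ne_bot huv) τ
    rw [← add_sum_erase _ _ (by simp [sup_eq_left.mpr (pairSetoid_le hτuv)])] at hW
    linear_combination hW
  have hT : ∀ x ∈ T, x < τ ∧ Nat.card (Quotient x) = Nat.card (Quotient τ) + 1 := by
    intro x hx
    simp only [T, mem_erase, mem_filter, mem_Iic] at hx
    obtain ⟨hne, hle, hsup⟩ := hx
    refine ⟨lt_of_le_of_ne hle hne, ?_⟩
    rw [card_quotient_eq_card_quotient_sup_pairSetoid_add_one, hsup]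
    exact fun hxuv => hne (by rw [← hsup, sup_eq_left.mpr (pairSetoid_le hxuv)])
  obtain ⟨x₀, hx₀, hx₀τ⟩ := exists_ne_sup_pairSetoid_eq huv hτuv
  have hTne : T.Nonempty :=
    ⟨x₀, mem_erase.mpr ⟨hx₀τ, mem_filter.mpr ⟨mem_Iic.mpr (hx₀ ▸ le_sup_left), hx₀⟩⟩⟩
  calc 0 < ∑ x ∈ T, (-1 : ℚ) ^ (Nat.card α + Nat.card (Quotient x)) * mu ℚ ⊥ x :=
        sum_pos (fun x hx => ih x (hT x hx).1) hTne
    _ = _ := by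
        rw [hmu, mul_neg, mul_sum, ← sum_neg_distrib]
        refine sum_congr rfl fun x hx => ?_
        rw [(hT x hx).2, ← add_assoc, pow_succ]
        ring

open IncidenceAlgebra in
open scoped Classical in
theorem mu_bot_mul_mu_bot_pos [Finite α] {σ τ : Setoid α}
    (h : Nat.card (Quotient σ) = Nat.card (Quotient τ)) : 0 < mu ℚ ⊥ σ * mu ℚ ⊥ τ := by
  have := mul_pos (neg_one_pow_mul_mu_bot_pos σ) (neg_one_pow_mul_mu_bot_pos τ)
  rwa [h, mul_mul_mul_comm, ← pow_add, Even.neg_one_pow ⟨_, rfl⟩, one_mul] at this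

end Setoid

theorem exists_sum_eq_sum_quotient {ι R : Type*} [Fintype ι] [CommRing R] [LinearOrder R]
    [IsStrictOrderedRing R] (r : Setoid ι) (c : ι → R) (hc : ∀ x y, r x y → 0 < c x * c y) :
    ∃ (n : ℕ) (S : Fin n → ι) (a : Fin n → R), (∀ i, a i ≠ 0) ∧
      (∀ i j, i ≠ j → ¬ r (S i) (S j)) ∧
      (∀ f : ι → R, (∀ x y, r x y → f x = f y) → ∑ x, c x * f x = ∑ i, a i * f (S i)) ∧
      ∀ x, ∃ i, r x (S i) := by
  classical
  let e := (Fintype.equivFin (Quotient r)).symm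
  let S i := (e i).out
  have hS : ∀ x i, Quotient.mk r x = e i → r x (S i) := fun x i hx =>
    Quotient.exact (hx.trans (e i).out_eq.symm)
  refine ⟨_, S, fun i => ∑ x with Quotient.mk r x = e i, c x, fun i h0 => ?_,
    fun i j hij h => hij (e.injective ?_), fun f hf => ?_, fun x => ⟨e.symm ⟦x⟧, hS _ _ ?_⟩⟩
  · -- every term of the class has the sign of `c (S i)`
    simp only at h0
    exact (sum_pos (fun x hx => hc x (S i) (hS x i (mem_filter.mp hx).2))
      ⟨S i, mem_filter.mpr ⟨mem_univ _, (e i).out_eq⟩⟩).ne' (by rw [← sum_mul, h0, zero_mul])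
  · rw [← (e i).out_eq, ← (e j).out_eq]; exact Quotient.sound h
  · rw [← sum_fiberwise univ (Quotient.mk r), ← e.sum_comp]
    refine sum_congr rfl fun i _ => ?_
    rw [sum_mul]
    exact sum_congr rfl fun x hx => by rw [hf x (S i) (hS x i (mem_filter.mp hx).2)]
  · simp

namespace Digraph

variable {A B : Type}

theorem digraphIso_iff_nonempty_relIso {K : Digraph A} {L : Digraph B} :
    DigraphIso K L ↔ Nonempty (K.Adj ≃r L.Adj) :=
  ⟨fun ⟨e, he⟩ => ⟨⟨e, (he _ _).symm⟩⟩, fun ⟨f⟩ => ⟨f.toEquiv, fun _ _ => f.map_rel_iff.symm⟩⟩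

theorem homCount_congr {A' : Type} {K : Digraph A} {K' : Digraph A'} (h : DigraphIso K K')
    (G : Digraph B) : homCount K G = homCount K' G := by
  obtain ⟨f⟩ := digraphIso_iff_nonempty_relIso.mp h
  exact Nat.card_congr
    { toFun φ := ⟨φ.1 ∘ f.symm, fun u v huv => φ.2 (f.symm.map_rel_iff.mpr huv)⟩
      invFun ψ := ⟨ψ.1 ∘ f, fun u v huv => ψ.2 (f.map_rel_iff.mpr huv)⟩
      left_inv φ := Subtype.ext (funext fun u => by simp)
      right_inv ψ := Subtype.ext (funext fun u => by simp) }

def quotIsoSetoid (K : Digraph A) : Setoid (Setoid A) where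
  r σ τ := DigraphIso (K.quot σ) (K.quot τ)
  iseqv :=
    { refl _ := ⟨Equiv.refl _, fun _ _ => Iff.rfl⟩
      symm := fun ⟨e, he⟩ => ⟨e.symm, fun u v => by rw [he]; simp⟩
      trans := fun ⟨e, he⟩ ⟨f, hf⟩ => ⟨e.trans f, fun u v => (he u v).trans (hf _ _)⟩ }

theorem isHom_quot_iff {K : Digraph A} {G : Digraph B} {σ : Setoid A} {ψ : Quotient σ → B} :
    (K.quot σ).IsHom G ψ ↔ K.IsHom G (ψ ∘ Quotient.mk σ) :=
  ⟨fun h _ _ huv => h ⟨_, _, rfl, rfl, huv⟩, fun h => by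
    rintro _ _ ⟨u, v, rfl, rfl, huv⟩; exact h huv⟩

theorem homCount_quot (K : Digraph A) (G : Digraph B) (σ : Setoid A) :
    homCount (K.quot σ) G = Nat.card {φ : A → B // K.IsHom G φ ∧ σ ≤ Setoid.ker φ} :=
  Nat.card_congr
    { toFun ψ := ⟨ψ.1 ∘ Quotient.mk σ, isHom_quot_iff.mp ψ.2,
        fun _ _ h => congrArg ψ.1 (Quotient.sound h)⟩
      invFun φ := ⟨Quotient.lift φ.1 φ.2.2, isHom_quot_iff.mpr φ.2.1⟩
      left_inv _ := Subtype.ext (funext fun X => Quotient.inductionOn X fun _ => rfl)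
      right_inv _ := rfl }

theorem homCount_quot_eq_sum [Finite A] [Finite B] (K : Digraph A) (G : Digraph B)
    (σ : Setoid A) :
    homCount (K.quot σ) G =
      ∑ τ ∈ Ici σ, Nat.card {φ : A → B // K.IsHom G φ ∧ Setoid.ker φ = τ} := by
  rw [homCount_quot, ← sum_coe_sort, ← Nat.card_sigma]
  exact Nat.card_congr
    { toFun φ := ⟨⟨Setoid.ker φ.1, mem_Ici.mpr φ.2.2⟩, φ.1, φ.2.1, rfl⟩
      invFun φ := ⟨φ.2.1, φ.2.2.1, (mem_Ici.mp φ.1.2).trans_eq φ.2.2.2.symm⟩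
      left_inv _ := rfl
      right_inv φ := Sigma.subtype_ext (Subtype.ext φ.2.2.2) rfl }

open IncidenceAlgebra in
open scoped Classical in
theorem card_injective_isHom_eq_sum_mu [Finite A] [Finite B] (K : Digraph A) (G : Digraph B) :
    (Nat.card {φ : A → B // K.IsHom G φ ∧ Function.Injective φ} : ℚ) =
      ∑ σ : Setoid A, mu ℚ ⊥ σ * homCount (K.quot σ) G := by
  have := moebius_inversion_top (𝕜 := ℚ)
    (fun τ => (Nat.card {φ : A → B // K.IsHom G φ ∧ Setoid.ker φ = τ} : ℚ))
    (fun σ => (homCount (K.quot σ) G : ℚ)) (fun σ => by rw [homCount_quot_eq_sum]; push_cast; rfl) ⊥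
  simpa only [Setoid.ker_eq_bot_iff, Ici_bot] using this

def autCount (K : Digraph A) : ℕ := Nat.card (K.Adj ≃r K.Adj)

theorem autCount_pos [Finite A] (K : Digraph A) : 0 < autCount K :=
  have : Finite (K.Adj ≃r K.Adj) := Finite.of_injective _ RelIso.toEquiv_injective
  Nat.card_pos_iff.mpr ⟨⟨RelIso.refl _⟩, this⟩

theorem card_relIso_eq_autCount {K : Digraph A} {L : Digraph B} (f : K.Adj ≃r L.Adj) :
    Nat.card (K.Adj ≃r L.Adj) = autCount K :=
  Nat.card_congr
    { toFun g := g.trans f.symm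
      invFun g := g.trans f
      left_inv g := by ext; simp
      right_inv g := by ext; simp }

/-- The subgraph of `G` traced out by `φ`, in the encoding used by `subCount`. -/
def imageCopy (K : Digraph A) (φ : A → B) : Set B × (B → B → Prop) :=
  (Set.range φ, Relation.Map K.Adj φ φ)

theorem imageCopy_isSubgraph {K : Digraph A} {G : Digraph B} {φ : A → B} (hφ : K.IsHom G φ) :
    ∀ a b, (K.imageCopy φ).2 a b → a ∈ (K.imageCopy φ).1 ∧ b ∈ (K.imageCopy φ).1 ∧ G.Adj a b := by
  rintro _ _ ⟨u, v, huv, rfl, rfl⟩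
  exact ⟨⟨u, rfl⟩, ⟨v, rfl⟩, hφ huv⟩

def fiberImageCopyEquiv (K : Digraph A) (G : Digraph B) {p : Set B × (B → B → Prop)}
    (hp : ∀ a b, p.2 a b → a ∈ p.1 ∧ b ∈ p.1 ∧ G.Adj a b) :
    {φ : {φ : A → B // K.IsHom G φ ∧ Function.Injective φ} // K.imageCopy φ.1 = p} ≃
      (K.Adj ≃r fun a b : p.1 => p.2 a b) where
  toFun φ :=
    { toEquiv := (Equiv.ofInjective _ φ.1.2.2).trans (Equiv.setCongr (congrArg Prod.fst φ.2))
      map_rel_iff' := fun {u v} => by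
        simp only [Equiv.trans_apply, Equiv.ofInjective_apply,
          ← congrArg Prod.snd φ.2, imageCopy]
        exact Relation.map_apply_apply φ.1.2.2 φ.1.2.2 _ u v }
  invFun e :=
    ⟨⟨Subtype.val ∘ e, fun u v huv => (hp _ _ (e.map_rel_iff.mpr huv)).2.2,
      Subtype.val_injective.comp e.injective⟩, Prod.ext (by simp [imageCopy]) <| by
        funext a b
        refine propext ⟨?_, fun hab => ?_⟩
        · rintro ⟨u, v, huv, rfl, rfl⟩; exact e.map_rel_iff.mpr huv
        · obtain ⟨ha, hb, -⟩ := hp a b hab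
          exact ⟨e.symm ⟨a, ha⟩, e.symm ⟨b, hb⟩, e.map_rel_iff.mp (by simpa using hab),
            by simp, by simp⟩⟩
  left_inv _ := rfl
  right_inv _ := RelIso.ext fun _ => rfl

theorem card_injective_isHom_eq_autCount_mul_subCount [Finite A] [Finite B] (K : Digraph A)
    (G : Digraph B) :
    Nat.card {φ : A → B // K.IsHom G φ ∧ Function.Injective φ} = autCount K * subCount K G := by
  classical
  set Copies := {p : Set B × (B → B → Prop) //
    (∀ a b, p.2 a b → a ∈ p.1 ∧ b ∈ p.1 ∧ G.Adj a b) ∧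
    DigraphIso K (Digraph.mk fun (a b : p.1) => p.2 a b)}
  let copy (φ : {φ : A → B // K.IsHom G φ ∧ Function.Injective φ}) : Copies :=
    ⟨K.imageCopy φ.1, imageCopy_isSubgraph φ.2.1, digraphIso_iff_nonempty_relIso.mpr
      ⟨fiberImageCopyEquiv K G (imageCopy_isSubgraph φ.2.1) ⟨φ, rfl⟩⟩⟩
  have hfiber (p : Copies) : Nat.card {φ // copy φ = p} = autCount K := by
    obtain ⟨f⟩ := digraphIso_iff_nonempty_relIso.mp p.2.2
    rw [← card_relIso_eq_autCount f]
    exact Nat.card_congr ((Equiv.subtypeEquivRight fun φ => Subtype.ext_iff).trans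
      (fiberImageCopyEquiv K G p.2.1))
  have : Fintype Copies := Fintype.ofFinite _
  rw [← Nat.card_congr (Equiv.sigmaFiberEquiv copy), Nat.card_sigma,
    sum_congr rfl fun p _ => hfiber p, sum_const, card_univ, smul_eq_mul, mul_comm, subCount,
    Nat.card_eq_fintype_card]

open IncidenceAlgebra in
open scoped Classical in
theorem subCount_eq_sum_mu [Finite A] [Finite B] (K : Digraph A) (G : Digraph B) :
    (subCount K G : ℚ) = ∑ σ : Setoid A, mu ℚ ⊥ σ / K.autCount * homCount (K.quot σ) G := by
  have h := card_injective_isHom_eq_sum_mu K G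
  rw [card_injective_isHom_eq_autCount_mul_subCount, Nat.cast_mul] at h
  simp_rw [div_mul_eq_mul_div, ← sum_div, ← h]
  field_simp [(autCount_pos K).ne']

end Digraph

theorem stmt6 {V : Type} [Fintype V] (H : Digraph V) :
    ∃ (n : ℕ) (S : Fin n → Setoid V) (a : Fin n → ℚ),
      (∀ i, a i ≠ 0) ∧
      (∀ i j, i ≠ j → ¬ DigraphIso (H.quot (S i)) (H.quot (S j))) ∧
      (∀ (W : Type) [Fintype W] (G : Digraph W),
        (subCount H G : ℚ) = ∑ i, a i * (homCount (H.quot (S i)) G : ℚ)) ∧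
      (∀ σ : Setoid V, ∃ i, DigraphIso (H.quot σ) (H.quot (S i))) := by
  classical
  obtain ⟨n, S, a, ha, hS, hsum, hcover⟩ := exists_sum_eq_sum_quotient H.quotIsoSetoid
    (fun σ => IncidenceAlgebra.mu ℚ ⊥ σ / H.autCount) fun σ τ ⟨e, _⟩ => by
      rw [div_mul_div_comm]
      exact div_pos (Setoid.mu_bot_mul_mu_bot_pos (Nat.card_congr e))
        (by have := H.autCount_pos; positivity)
  refine ⟨n, S, a, ha, hS, fun W _ G => ?_, hcover⟩
  rw [H.subCount_eq_sum_mu G]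
  exact hsum _ fun σ τ h => congrArg Nat.cast (Digraph.homCount_congr h G)
end
end
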